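/- Let n = q·d with q ≥ 1 an integer, n > 1 and d ≥ 1. Let π = (π_1,…,π_n) be a uniformly random permutation of the multiset S = {1,…,1, 2,…,2, …, d,…,d} in which each element of {1,…,d} occurs exactly q times (equivalently, π is uniformly distributed on the set of functions from {1,…,n} to {1,…,d} such that every value is attained exactly q times). For i ∈ {1,…,n} define C_i(x) := d · x_{π_i} e_{π_i} for x ∈ ℝ^d. Then: (i) each C_i is unbiased; and (ii) for all a_1,…,a_n ∈ ℝ^d, E[‖(1/n)Σ_{i=1}^n C_i(a_i) − (1/n)Σ_{i=1}^n a_i‖²] ≤ (1 − (n−d)/(n−1))·(1/n)Σ_{i=1}^n ‖a_i‖² − (1 − (n−d)/(n−1))·‖(1/n)Σ_{i=1}^n a_i‖² (i.e. {C_i}_{i=1}^n satisfies the AB inequality with A = B = 1 − (n−d)/(n−1)). -/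

import Mathlib

open Finset

/-- Expectation (uniform average) over a finite type, valued in a real vector space. -/
noncomputable def finExp {α V : Type*} [Fintype α] [AddCommGroup V] [Module ℝ V]
    (F : α → V) : V :=
  (Fintype.card α : ℝ)⁻¹ • ∑ a, F a

/-- Random permutations of the multiset `{1,…,1,2,…,2,…,d,…,d}` (each value `q` times),
i.e. functions `Fin n → Fin d` attaining every value exactly `q` times. -/
def MultisetPerm (n d q : ℕ) : Type :=
  {f : Fin n → Fin d // ∀ v : Fin d, (Finset.univ.filter (fun i => f i = v)).card = q}

instance (n d q : ℕ) : Fintype (MultisetPerm n d q) := by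
  unfold MultisetPerm; infer_instance

/-- The PermK compressor in the case `n = q·d`: worker `i` sends `d · x_{π i} e_{π i}`. -/
noncomputable def permK (n d q : ℕ) (π : MultisetPerm n d q) (i : Fin n)
    (x : EuclideanSpace ℝ (Fin d)) : EuclideanSpace ℝ (Fin d) :=
  (d : ℝ) • EuclideanSpace.single (π.1 i) (x (π.1 i))

/-!
Everything is computed coordinatewise from the first two moments of the indicators
`π i = l`. Relabelling values and positions preserves the uniform distribution on
`MultisetPerm n d q`, so `P(π i = l) = 1/d`, and for `i ≠ j` the probability of `π i = π j = l`
does not depend on `j` and `l`; since every `π` has exactly `q - 1` positions `j ≠ i` with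
`π j = π i`, double counting gives `P(π i = π j = l) = (q - 1)/(d (n - 1))`. Expanding the
square, the AB inequality holds with equality, because `d (q - 1) = n - d`.
-/

section WeightedCount

variable {Ω ι : Type*} [Fintype Ω] [Fintype ι] (P : ι → Ω → Prop) [∀ i, DecidablePred (P i)]
  (b : ι → ℝ)

theorem sum_sum_filter : ∑ ω, ∑ i ∈ {i | P i ω}, b i = ∑ i, (#{ω | P i ω} : ℝ) * b i := by
  simp_rw [sum_filter]
  rw [sum_comm]
  simp [← sum_filter, sum_const]

theorem sum_sq_sum_filter :
    ∑ ω, (∑ i ∈ {i | P i ω}, b i) ^ 2 = ∑ i, ∑ j, (#{ω | P i ω ∧ P j ω} : ℝ) * (b i * b j) := by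
  simp_rw [sum_filter, sq, sum_mul_sum, ite_zero_mul_ite_zero]
  rw [sum_comm]
  simp_rw [sum_comm (s := univ (α := Ω)), ← sum_filter, sum_const, nsmul_eq_mul]

end WeightedCount

theorem sum_sum_mul_mul_eq_of_offDiag_eq {ι : Type*} [Fintype ι] [DecidableEq ι] (b : ι → ℝ)
    {c : ι → ι → ℝ} {α β : ℝ}
    (hdiag : ∀ i, c i i = α) (hoff : ∀ i j, i ≠ j → c i j = β) :
    ∑ i, ∑ j, c i j * (b i * b j) = (α - β) * ∑ i, b i ^ 2 + β * (∑ i, b i) ^ 2 := by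
  have hc : ∀ i j, c i j = β + if i = j then α - β else 0 := by
    intro i j
    split_ifs with h
    · subst h; rw [hdiag]; ring
    · rw [hoff i j h, add_zero]
  simp only [hc, add_mul, sum_add_distrib, ite_mul, zero_mul, sum_ite_eq, mem_univ, if_true,
    ← mul_sum, sq, sum_mul_sum]
  ring

namespace MultisetPerm

variable {n d q : ℕ}

theorem nonempty_of_eq_mul (hn : n = q * d) : Nonempty (MultisetPerm n d q) := by
  subst hn
  refine ⟨⟨fun i => (finProdFinEquiv.symm i).2, fun v => ?_⟩⟩
  calc #{i | (finProdFinEquiv.symm i).2 = v}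
      = #{p : Fin q × Fin d | p.2 = v} := card_equiv finProdFinEquiv.symm (by simp)
    _ = #(univ ×ˢ {v}) := by congr 1; ext ⟨k, w⟩; simp [eq_comm]
    _ = q := by simp

def relabel (τ : Equiv.Perm (Fin n)) (σ : Equiv.Perm (Fin d)) :
    MultisetPerm n d q ≃ MultisetPerm n d q :=
  (τ.arrowCongr σ).subtypeEquiv fun f => σ.forall_congr fun v => by
    rw [card_equiv (s := {i | τ.arrowCongr σ f i = σ v}) (t := {i | f i = v}) τ.symm (by simp)]

@[simp]
theorem relabel_apply (τ : Equiv.Perm (Fin n)) (σ : Equiv.Perm (Fin d)) (π : MultisetPerm n d q)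
    (i : Fin n) : (relabel τ σ π).1 i = σ (π.1 (τ.symm i)) :=
  rfl

theorem card_filter_apply_eq_congr (i : Fin n) (l l' : Fin d) :
    #{π : MultisetPerm n d q | π.1 i = l} = #{π : MultisetPerm n d q | π.1 i = l'} :=
  card_equiv (relabel (Equiv.refl _) (Equiv.swap l l')) fun π => by simp [Equiv.swap_apply_eq_iff]

theorem mul_card_filter_apply_eq (i : Fin n) (l : Fin d) :
    d * #{π : MultisetPerm n d q | π.1 i = l} = Fintype.card (MultisetPerm n d q) :=
  calc d * #{π : MultisetPerm n d q | π.1 i = l}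
      = ∑ l', #{π : MultisetPerm n d q | π.1 i = l'} := by
        simp [card_filter_apply_eq_congr i _ l]
    _ = Fintype.card (MultisetPerm n d q) := by
        rw [← card_univ, card_eq_sum_card_fiberwise (f := fun π : MultisetPerm n d q => π.1 i)
          (t := univ) (by simp)]

theorem card_filter_apply_eq_apply_eq_congr {i j j' : Fin n} (hj : j ≠ i) (hj' : j' ≠ i)
    (l l' : Fin d) :
    #{π : MultisetPerm n d q | π.1 i = l ∧ π.1 j = l} =
      #{π : MultisetPerm n d q | π.1 i = l' ∧ π.1 j' = l'} :=
  card_equiv (relabel (Equiv.swap j j') (Equiv.swap l l')) fun π => by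
    simp [Equiv.swap_apply_of_ne_of_ne hj.symm hj'.symm, Equiv.swap_apply_eq_iff]

theorem card_filter_erase_apply_eq (π : MultisetPerm n d q) (i : Fin n) :
    #{j ∈ univ.erase i | π.1 j = π.1 i} = q - 1 := by
  rw [filter_erase, card_erase_of_mem (by simp), π.2]

theorem mul_card_filter_apply_eq_apply_eq {i j : Fin n} (hij : j ≠ i) (l : Fin d) :
    (n - 1) * d * #{π : MultisetPerm n d q | π.1 i = l ∧ π.1 j = l} =
      Fintype.card (MultisetPerm n d q) * (q - 1) :=
  calc (n - 1) * d * #{π : MultisetPerm n d q | π.1 i = l ∧ π.1 j = l}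
      = ∑ j' ∈ univ.erase i, ∑ l', #{π : MultisetPerm n d q | π.1 i = l' ∧ π.1 j' = l'} := by
        rw [sum_const_nat fun j' hj' => ?_, card_erase_of_mem (mem_univ i), card_univ,
          Fintype.card_fin, mul_assoc]
        simp [card_filter_apply_eq_apply_eq_congr (ne_of_mem_erase hj') hij _ l]
    _ = ∑ j' ∈ univ.erase i, #{π : MultisetPerm n d q | π.1 j' = π.1 i} := by
        refine sum_congr rfl fun j' _ => ?_
        rw [card_eq_sum_card_fiberwise (f := fun π : MultisetPerm n d q => π.1 i)
          (t := univ) (by simp)]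
        refine sum_congr rfl fun l' _ => ?_
        rw [filter_filter]
        exact congrArg card <| filter_congr fun π _ =>
          ⟨fun ⟨h, h'⟩ => ⟨h'.trans h.symm, h⟩, fun ⟨h, h'⟩ => ⟨h', h.trans h'⟩⟩
    _ = ∑ π : MultisetPerm n d q, #{j' ∈ univ.erase i | π.1 j' = π.1 i} :=
        sum_card_bipartiteAbove_eq_sum_card_bipartiteBelow _
    _ = Fintype.card (MultisetPerm n d q) * (q - 1) := by
        simp [card_filter_erase_apply_eq]

theorem mul_sum_sum_filter_apply_eq (b : Fin n → ℝ) (l : Fin d) :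
    d * ∑ π : MultisetPerm n d q, ∑ i ∈ {i | π.1 i = l}, b i =
      Fintype.card (MultisetPerm n d q) * ∑ i, b i := by
  rw [sum_sum_filter (fun i (π : MultisetPerm n d q) => π.1 i = l), mul_sum, mul_sum]
  refine sum_congr rfl fun i _ => ?_
  rw [← mul_assoc]
  congr 1
  exact_mod_cast mul_card_filter_apply_eq i l

theorem mul_sum_sq_sum_filter_apply_eq (hn : n = q * d) (b : Fin n → ℝ) (l : Fin d) :
    (d : ℝ) ^ 2 * (n - 1) * ∑ π : MultisetPerm n d q, (∑ i ∈ {i | π.1 i = l}, b i) ^ 2 =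
      Fintype.card (MultisetPerm n d q) *
        ((d * (n - 1) - (n - d)) * ∑ i, b i ^ 2 + (n - d) * (∑ i, b i) ^ 2) := by
  set N : ℝ := (Fintype.card (MultisetPerm n d q) : ℝ)
  have hdiag : ∀ i, (d : ℝ) ^ 2 * (n - 1) * #{π : MultisetPerm n d q | π.1 i = l ∧ π.1 i = l} =
      N * (d * (n - 1)) := fun i => by
    have h := mul_card_filter_apply_eq (q := q) i l
    simp only [and_self]
    rw [← Nat.cast_inj (R := ℝ), Nat.cast_mul] at h
    linear_combination (d * ((n : ℝ) - 1)) * h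
  have hoff : ∀ i j, i ≠ j → (d : ℝ) ^ 2 * (n - 1) *
      #{π : MultisetPerm n d q | π.1 i = l ∧ π.1 j = l} = N * (n - d) := fun i j hij => by
    have hq : 0 < q := (CanonicallyOrderedAdd.mul_pos.1 (hn ▸ i.pos : 0 < q * d)).1
    have h := mul_card_filter_apply_eq_apply_eq (q := q) hij.symm l
    rw [← Nat.cast_inj (R := ℝ)] at h
    push_cast [Nat.cast_sub i.pos, Nat.cast_sub hq] at h
    have hnR : (n : ℝ) = q * d := by exact_mod_cast hn
    linear_combination (d : ℝ) * h - N * hnR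
  calc (d : ℝ) ^ 2 * (n - 1) * ∑ π : MultisetPerm n d q, (∑ i ∈ {i | π.1 i = l}, b i) ^ 2
      = ∑ i, ∑ j, (d : ℝ) ^ 2 * (n - 1) * #{π : MultisetPerm n d q | π.1 i = l ∧ π.1 j = l} *
          (b i * b j) := by
        rw [sum_sq_sum_filter (fun i (π : MultisetPerm n d q) => π.1 i = l)]
        simp only [mul_sum, mul_assoc]
    _ = (N * (d * (n - 1)) - N * (n - d)) * ∑ i, b i ^ 2 + N * (n - d) * (∑ i, b i) ^ 2 :=
        sum_sum_mul_mul_eq_of_offDiag_eq b hdiag hoff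
    _ = N * ((d * (n - 1) - (n - d)) * ∑ i, b i ^ 2 + (n - d) * (∑ i, b i) ^ 2) := by ring

theorem sum_sq_centered_sum_filter_apply_eq (hn1 : 1 < n) (hn : n = q * d) (b : Fin n → ℝ)
    (l : Fin d) :
    ∑ π : MultisetPerm n d q,
        ((n : ℝ)⁻¹ * (d * ∑ i ∈ {i | π.1 i = l}, b i) - (n : ℝ)⁻¹ * ∑ i, b i) ^ 2 =
      Fintype.card (MultisetPerm n d q) *
        ((1 - ((n : ℝ) - d) / ((n : ℝ) - 1)) * ((n : ℝ)⁻¹ * ∑ i, b i ^ 2) -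
          (1 - ((n : ℝ) - d) / ((n : ℝ) - 1)) * ((n : ℝ)⁻¹ * ∑ i, b i) ^ 2) := by
  have hn10 : (n : ℝ) - 1 ≠ 0 := sub_ne_zero.2 (by exact_mod_cast hn1.ne')
  set T : MultisetPerm n d q → ℝ := fun π => ∑ i ∈ {i | π.1 i = l}, b i
  have hfirst : d * ∑ π, T π = Fintype.card (MultisetPerm n d q) * ∑ i, b i :=
    mul_sum_sum_filter_apply_eq b l
  have hsecond : (d : ℝ) ^ 2 * (n - 1) * ∑ π, T π ^ 2 =
      Fintype.card (MultisetPerm n d q) *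
        ((d * (n - 1) - (n - d)) * ∑ i, b i ^ 2 + (n - d) * (∑ i, b i) ^ 2) :=
    mul_sum_sq_sum_filter_apply_eq hn b l
  have hexpand : ∀ π, ((n : ℝ)⁻¹ * (d * T π) - (n : ℝ)⁻¹ * ∑ i, b i) ^ 2 =
      ((n : ℝ)⁻¹ * d) ^ 2 * T π ^ 2 - 2 * (n : ℝ)⁻¹ * d * ((n : ℝ)⁻¹ * ∑ i, b i) * T π
        + ((n : ℝ)⁻¹ * ∑ i, b i) ^ 2 := fun π => by ring
  refine (sum_congr rfl fun π _ => hexpand π).trans ?_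
  clear_value T
  simp only [sum_add_distrib, sum_sub_distrib, ← mul_sum, sum_const, card_univ, nsmul_eq_mul]
  field_simp
  linear_combination hsecond - 2 * (∑ i, b i) * ((n : ℝ) - 1) * hfirst

end MultisetPerm

section PermK

variable {n d q : ℕ}

open MultisetPerm

theorem permK_apply (π : MultisetPerm n d q) (i : Fin n) (x : EuclideanSpace ℝ (Fin d))
    (l : Fin d) : permK n d q π i x l = if π.1 i = l then d * x l else 0 := by
  by_cases h : π.1 i = l
  · simp [permK, h]
  · simp [permK, h, Ne.symm h]

theorem sum_permK_apply (π : MultisetPerm n d q) (a : Fin n → EuclideanSpace ℝ (Fin d))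
    (l : Fin d) : (∑ i, permK n d q π i (a i)) l = d * ∑ i ∈ {i | π.1 i = l}, a i l := by
  simp [permK_apply, sum_filter, mul_sum]

theorem finExp_permK (hn : n = q * d) (i : Fin n) (x : EuclideanSpace ℝ (Fin d)) :
    finExp (fun π : MultisetPerm n d q => permK n d q π i x) = x := by
  have := nonempty_of_eq_mul hn
  ext l
  simp only [finExp, PiLp.smul_apply, WithLp.ofLp_sum, Finset.sum_apply, permK_apply, smul_eq_mul]
  rw [← sum_filter, sum_const, nsmul_eq_mul,
    inv_mul_eq_iff_eq_mul₀ (Nat.cast_ne_zero.2 Fintype.card_ne_zero)]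
  have h : (d : ℝ) * #{π : MultisetPerm n d q | π.1 i = l} = Fintype.card (MultisetPerm n d q) := by
    exact_mod_cast mul_card_filter_apply_eq i l
  linear_combination x l * h

theorem finExp_norm_sq_sub_eq (hn1 : 1 < n) (hn : n = q * d)
    (a : Fin n → EuclideanSpace ℝ (Fin d)) :
    finExp (fun π : MultisetPerm n d q =>
        ‖(n : ℝ)⁻¹ • ∑ i, permK n d q π i (a i) - (n : ℝ)⁻¹ • ∑ i, a i‖ ^ 2) =
      (1 - ((n : ℝ) - d) / ((n : ℝ) - 1)) * ((n : ℝ)⁻¹ * ∑ i, ‖a i‖ ^ 2) -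
        (1 - ((n : ℝ) - d) / ((n : ℝ) - 1)) * ‖(n : ℝ)⁻¹ • ∑ i, a i‖ ^ 2 := by
  have := nonempty_of_eq_mul hn
  have hN : (Fintype.card (MultisetPerm n d q) : ℝ) ≠ 0 := Nat.cast_ne_zero.2 Fintype.card_ne_zero
  simp only [finExp, EuclideanSpace.norm_sq_eq, Real.norm_eq_abs, sq_abs, PiLp.sub_apply,
    PiLp.smul_apply, sum_permK_apply, WithLp.ofLp_sum, Finset.sum_apply, smul_eq_mul]
  rw [sum_comm, mul_sum]
  simp_rw [sum_sq_centered_sum_filter_apply_eq hn1 hn, inv_mul_cancel_left₀ hN]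
  rw [sum_sub_distrib, ← mul_sum, ← mul_sum, ← mul_sum, sum_comm]

end PermK

theorem permK_nd_unbiased_and_AB_general
    {q n d : ℕ} (hn1 : 1 < n) (hn : n = q * d) :
    (∀ (i : Fin n) (x : EuclideanSpace ℝ (Fin d)),
      finExp (fun π : MultisetPerm n d q => permK n d q π i x) = x) ∧
    (∀ a : Fin n → EuclideanSpace ℝ (Fin d),
      finExp (fun π : MultisetPerm n d q =>
          ‖(n : ℝ)⁻¹ • ∑ i, permK n d q π i (a i) - (n : ℝ)⁻¹ • ∑ i, a i‖ ^ 2) ≤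
        (1 - ((n : ℝ) - d) / ((n : ℝ) - 1)) * ((n : ℝ)⁻¹ * ∑ i, ‖a i‖ ^ 2) -
          (1 - ((n : ℝ) - d) / ((n : ℝ) - 1)) * ‖(n : ℝ)⁻¹ • ∑ i, a i‖ ^ 2) :=
  ⟨finExp_permK hn, fun a => (finExp_norm_sq_sub_eq hn1 hn a).le⟩

/-- For `n = q·d`, `n > 1`, the PermK compressors are unbiased and satisfy
the AB inequality with `A = B = 1 − (n−d)/(n−1)`, with expectation over the uniformly
random assignment `π`. -/
theorem permK_nd_unbiased_and_AB
    {q n d : ℕ} (hq : 1 ≤ q) (hd : 1 ≤ d) (hn1 : 1 < n) (hn : n = q * d) :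
    (∀ (i : Fin n) (x : EuclideanSpace ℝ (Fin d)),
      finExp (fun π : MultisetPerm n d q => permK n d q π i x) = x) ∧
    (∀ a : Fin n → EuclideanSpace ℝ (Fin d),
      finExp (fun π : MultisetPerm n d q =>
          ‖(n : ℝ)⁻¹ • ∑ i, permK n d q π i (a i) - (n : ℝ)⁻¹ • ∑ i, a i‖ ^ 2) ≤
        (1 - ((n : ℝ) - d) / ((n : ℝ) - 1)) * ((n : ℝ)⁻¹ * ∑ i, ‖a i‖ ^ 2) -
          (1 - ((n : ℝ) - d) / ((n : ℝ) - 1)) * ‖(n : ℝ)⁻¹ • ∑ i, a i‖ ^ 2) :=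
  permK_nd_unbiased_and_AB_general hn1 hn
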